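/- arXiv:2503.10971 — 2 statements merged into one kernel-verified Lean document; each statement's English description precedes it below -/
import Mathlib

section
/- Let n be a positive integer and define u(x) := √(2k²/(1+k²))·y((2nx+1)·K(k)) for x ∈ [0,1]. Then ∫₀¹ u(x)² dx = (2/(1+k²))·(1 − E(k)/K(k)). -/
open Real Filter Set

/-- The complete elliptic integral of the first kind. -/
noncomputable def Kint (k : ℝ) : ℝ :=
  ∫ s in (0:ℝ)..1, 1 / Real.sqrt ((1 - s ^ 2) * (1 - k ^ 2 * s ^ 2))

/-- The complete elliptic integral of the second kind. -/
noncomputable def Eint (k : ℝ) : ℝ :=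
  ∫ s in (0:ℝ)..1, Real.sqrt ((1 - k ^ 2 * s ^ 2) / (1 - s ^ 2))

open intervalIntegral MeasureTheory Topology

/-!
Integrating the equation once gives the energy identity `y'² = (1 - y²)(1 - k²y²)`. As long as
`y` increases it is therefore the inverse of `x ↦ ∫₀ˣ ds / √((1 - s²)(1 - k²s²))`, so `y` rises
from `0` to `1` exactly on `[0, K]`, and the substitution `s = y t` turns `∫₀ᴷ y²` into
`∫₀¹ s² / √((1 - s²)(1 - k²s²)) ds = (K - E) / k²`. Uniqueness for the (odd) equation makes `y`
odd and symmetric about `K`, so `y²` is `2K`-periodic and `∫₀^{2K} y² = 2 ∫₀ᴷ y²`; as `x` runs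
over `[0, 1]` the argument `(2nx + 1)K` sweeps `n` whole periods, so `∫₀¹ u²` is
`2k²/(1 + k²)` times the mean `(1/K) ∫₀ᴷ y²` of `y²`.
-/

theorem ODE_solution_unique_of_locallyLipschitz {E : Type*} [NormedAddCommGroup E]
    [NormedSpace ℝ E] {v : E → E} (hv : LocallyLipschitz v) {f g : ℝ → E}
    (hf : ∀ t, HasDerivAt f (v (f t)) t) (hg : ∀ t, HasDerivAt g (v (g t)) t)
    {t₀ : ℝ} (heq : f t₀ = g t₀) : f = g := by
  have hfc : Continuous f := continuous_iff_continuousAt.2 fun t => (hf t).continuousAt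
  have hgc : Continuous g := continuous_iff_continuousAt.2 fun t => (hg t).continuousAt
  suffices h : {t | f t = g t} = univ from funext (eq_univ_iff_forall.1 h)
  refine IsClopen.eq_univ ⟨isClosed_eq hfc hgc, isOpen_iff_mem_nhds.2 fun t ht => ?_⟩ ⟨t₀, heq⟩
  obtain ⟨K, U, hU, hK⟩ := hv (f t)
  have hfU : ∀ᶠ s in 𝓝 t, f s ∈ U := hfc.continuousAt.preimage_mem_nhds hU
  have hgU : ∀ᶠ s in 𝓝 t, g s ∈ U := hgc.continuousAt.preimage_mem_nhds (by rwa [← ht])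
  exact ODE_solution_unique_of_eventually (v := fun _ => v) (s := fun _ => U)
    (.of_forall fun _ => hK) (hfU.mono fun s hs => ⟨hf s, hs⟩) (hgU.mono fun s hs => ⟨hg s, hs⟩) ht

theorem ODE_solution_unique_second_order {F : ℝ → ℝ} (hF : LocallyLipschitz F)
    {y₁ y₁' y₂ y₂' : ℝ → ℝ}
    (h₁ : ∀ t, HasDerivAt y₁ (y₁' t) t) (h₁' : ∀ t, HasDerivAt y₁' (F (y₁ t)) t)
    (h₂ : ∀ t, HasDerivAt y₂ (y₂' t) t) (h₂' : ∀ t, HasDerivAt y₂' (F (y₂ t)) t)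
    {t₀ : ℝ} (e : y₁ t₀ = y₂ t₀) (e' : y₁' t₀ = y₂' t₀) : y₁ = y₂ := by
  have hv : LocallyLipschitz fun p : ℝ × ℝ => (p.2, F p.1) :=
    LipschitzWith.prod_snd.locallyLipschitz.prodMk
      (hF.comp LipschitzWith.prod_fst.locallyLipschitz)
  have h := ODE_solution_unique_of_locallyLipschitz hv (f := fun t => (y₁ t, y₁' t))
    (g := fun t => (y₂ t, y₂' t)) (fun t => (h₁ t).prodMk (h₁' t))
    (fun t => (h₂ t).prodMk (h₂' t)) (Prod.ext e e')
  exact funext fun t => congrArg Prod.fst (congrFun h t)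

theorem ODE_second_order_reflect_of_deriv_eq_zero {F : ℝ → ℝ} (hF : LocallyLipschitz F)
    {y y' : ℝ → ℝ} (hy : ∀ t, HasDerivAt y (y' t) t) (hy' : ∀ t, HasDerivAt y' (F (y t)) t)
    {a : ℝ} (ha : y' a = 0) (t : ℝ) : y (2 * a - t) = y t := by
  have h := ODE_solution_unique_second_order hF (y₁ := fun t => y (2 * a - t))
    (y₁' := fun t => -y' (2 * a - t)) (fun t => (hy _).comp_const_sub _ t)
    (fun t => by simpa using ((hy' _).comp_const_sub _ t).fun_neg) hy hy' (t₀ := a)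
    (by simp [two_mul]) (by simp [two_mul, ha])
  exact congrFun h t

theorem ODE_second_order_reflect_of_eq_zero {F : ℝ → ℝ} (hF : LocallyLipschitz F)
    (hF_odd : ∀ x, F (-x) = -F x)
    {y y' : ℝ → ℝ} (hy : ∀ t, HasDerivAt y (y' t) t) (hy' : ∀ t, HasDerivAt y' (F (y t)) t)
    {a : ℝ} (ha : y a = 0) (t : ℝ) : y (2 * a - t) = -y t := by
  have h := ODE_solution_unique_second_order hF (y₁ := fun t => -y (2 * a - t))
    (y₁' := fun t => y' (2 * a - t)) (fun t => by simpa using ((hy _).comp_const_sub _ t).fun_neg)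
    (fun t => by simpa [hF_odd] using (hy' _).comp_const_sub _ t) hy hy' (t₀ := a)
    (by simp [two_mul, ha]) (by simp [two_mul])
  rw [← congrFun h t, neg_neg]

theorem ODE_second_order_energy_eq {F G : ℝ → ℝ} (hG : ∀ x, HasDerivAt G (F x) x)
    {y y' : ℝ → ℝ} (hy : ∀ t, HasDerivAt y (y' t) t) (hy' : ∀ t, HasDerivAt y' (F (y t)) t)
    (t t₀ : ℝ) : y' t ^ 2 - 2 * G (y t) = y' t₀ ^ 2 - 2 * G (y t₀) := by
  have h : ∀ t, HasDerivAt (fun t => y' t ^ 2 - 2 * G (y t)) 0 t := fun t => by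
    refine (((hy' t).fun_pow 2).fun_sub (((hG _).comp t (hy t)).const_mul 2)).congr_deriv ?_
    ring
  exact is_const_of_deriv_eq_zero (fun t => (h t).differentiableAt) (fun t => (h t).deriv) t t₀

theorem ODE_second_order_antiperiodic {F : ℝ → ℝ} (hF : LocallyLipschitz F)
    (hF_odd : ∀ x, F (-x) = -F x)
    {y y' : ℝ → ℝ} (hy : ∀ t, HasDerivAt y (y' t) t) (hy' : ∀ t, HasDerivAt y' (F (y t)) t)
    {a b : ℝ} (ha : y a = 0) (hb : y' b = 0) : Function.Antiperiodic y (2 * (b - a)) := fun t => by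
  rw [← ODE_second_order_reflect_of_deriv_eq_zero hF hy hy' hb,
    show 2 * b - (t + 2 * (b - a)) = 2 * a - t by ring,
    ODE_second_order_reflect_of_eq_zero hF hF_odd hy hy' ha]

lemma pos_of_forall_ne_zero {f : ℝ → ℝ} {a b : ℝ} (hab : a ≤ b) (hf : ContinuousOn f (Icc a b))
    (ha : 0 < f a) (h : ∀ x ∈ Icc a b, f x ≠ 0) : 0 < f b := by
  by_contra! hb
  obtain ⟨x, hx, hx0⟩ := intermediate_value_Icc' hab hf ⟨hb, ha.le⟩
  exact h x hx hx0

theorem Function.Periodic.intervalIntegral_comp_mul_add {f : ℝ → ℝ} {T : ℝ}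
    (hf : Function.Periodic f T) (hT : T ≠ 0)
    (hfi : ∀ t₁ t₂, IntervalIntegrable f volume t₁ t₂) {n : ℕ} (hn : n ≠ 0) (a : ℝ) :
    ∫ x in (0:ℝ)..1, f (n * T * x + a) = T⁻¹ * ∫ x in (0:ℝ)..T, f x := by
  have hnT : (n : ℝ) * T ≠ 0 := mul_ne_zero (Nat.cast_ne_zero.2 hn) hT
  have h := hf.intervalIntegral_add_zsmul_eq n a hfi
  simp only [zsmul_eq_mul, Int.cast_natCast] at h
  rw [integral_comp_mul_add f hnT, mul_zero, mul_one, zero_add, add_comm, h,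
    hf.intervalIntegral_add_eq a 0, zero_add, smul_eq_mul]
  field_simp

theorem integral_zero_two_mul_eq_of_reflect {f : ℝ → ℝ} {a : ℝ} (hf : ∀ t, f (2 * a - t) = f t)
    (hfi : ∀ t₁ t₂, IntervalIntegrable f volume t₁ t₂) :
    ∫ x in (0:ℝ)..2 * a, f x = 2 * ∫ x in (0:ℝ)..a, f x := by
  have h := integral_comp_sub_left f (2 * a) (a := 0) (b := a)
  simp only [hf, sub_zero, show 2 * a - a = a by ring] at h
  rw [← integral_add_adjacent_intervals (hfi 0 a) (hfi a (2 * a)), ← h, two_mul]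

theorem Function.Periodic.intervalIntegral_comp_two_mul_nat_mul_add_one {f : ℝ → ℝ} {K : ℝ}
    (hf : Function.Periodic f (2 * K)) (hrefl : ∀ t, f (2 * K - t) = f t) (hK : K ≠ 0)
    (hfi : ∀ t₁ t₂, IntervalIntegrable f volume t₁ t₂) {n : ℕ} (hn : n ≠ 0) :
    ∫ x in (0:ℝ)..1, f ((2 * n * x + 1) * K) = K⁻¹ * ∫ x in (0:ℝ)..K, f x := by
  have h := hf.intervalIntegral_comp_mul_add (mul_ne_zero two_ne_zero hK) hfi hn K
  rw [integral_zero_two_mul_eq_of_reflect hrefl hfi] at h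
  rw [← show (2 * K)⁻¹ * (2 * ∫ x in (0:ℝ)..K, f x) = K⁻¹ * ∫ x in (0:ℝ)..K, f x by
    field_simp, ← h]
  refine integral_congr fun x _ => ?_
  ring_nf

lemma sqrt_div_eq_mul_one_div_sqrt_mul {a : ℝ} (b : ℝ) (ha : 0 ≤ a) :
    √(a / b) = a * (1 / √(b * a)) := by
  rw [Real.sqrt_div ha, Real.sqrt_mul' _ ha]
  rcases ha.eq_or_lt with h0 | hpos
  · simp [← h0]
  · have := Real.sqrt_pos.2 hpos
    field_simp
    rw [Real.sq_sqrt ha]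

noncomputable def ellipticKernel (k s : ℝ) : ℝ := 1 / √((1 - s ^ 2) * (1 - k ^ 2 * s ^ 2))

-- Legendre's incomplete integral `F(arcsin x, k)`; `sn(·, k)` inverts it on `[0, K]`.
noncomputable def ellipticF (k x : ℝ) : ℝ := ∫ s in (0:ℝ)..x, ellipticKernel k s

lemma ellipticF_zero (k : ℝ) : ellipticF k 0 = 0 := integral_same

lemma ellipticF_one (k : ℝ) : ellipticF k 1 = Kint k := rfl

section EllipticIntegrals

variable {k : ℝ}

lemma one_sub_sq_mul_sq_pos (hk : k ∈ Ioo 0 1) {s : ℝ} (hs : s ∈ Icc (-1) 1) :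
    0 < 1 - k ^ 2 * s ^ 2 := by
  have : s ^ 2 ≤ 1 := sq_le_one_iff_abs_le_one s |>.2 (abs_le.2 hs)
  nlinarith [hk.1, hk.2]

lemma sqrt_ellipticKernel_denom_pos (hk : k ∈ Ioo 0 1) {s : ℝ} (hs : s ∈ Ioo (-1) 1) :
    0 < √((1 - s ^ 2) * (1 - k ^ 2 * s ^ 2)) := by
  have h₁ : 0 < 1 - s ^ 2 := by nlinarith [hs.1, hs.2]
  have h₂ := one_sub_sq_mul_sq_pos hk (Ioo_subset_Icc_self hs)
  positivity

lemma ellipticKernel_pos (hk : k ∈ Ioo 0 1) {s : ℝ} (hs : s ∈ Ioo (-1) 1) :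
    0 < ellipticKernel k s :=
  one_div_pos.2 (sqrt_ellipticKernel_denom_pos hk hs)

lemma continuousOn_ellipticKernel (hk : k ∈ Ioo 0 1) :
    ContinuousOn (ellipticKernel k) (Ioo (-1) 1) := fun s hs =>
  ContinuousAt.continuousWithinAt <|
    show ContinuousAt (fun s => 1 / √((1 - s ^ 2) * (1 - k ^ 2 * s ^ 2))) s from
      continuousAt_const.div (by fun_prop) (sqrt_ellipticKernel_denom_pos hk hs).ne'

lemma ellipticKernel_le (hk : k ∈ Ioo 0 1) {s : ℝ} (hs : s ∈ Icc (-1) 1) :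
    ellipticKernel k s ≤ (√(1 - k ^ 2))⁻¹ * √((1 - s ^ 2)⁻¹) := by
  have h₁ : 0 ≤ 1 - s ^ 2 := by nlinarith [hs.1, hs.2]
  have hk₂ : 0 < 1 - k ^ 2 := by nlinarith [hk.1, hk.2]
  rw [ellipticKernel, Real.sqrt_mul h₁, one_div, mul_inv, mul_comm, Real.sqrt_inv]
  gcongr
  nlinarith [hk.1, hk.2]

lemma intervalIntegrable_ellipticKernel (hk : k ∈ Ioo 0 1) {a b : ℝ} (ha : a ∈ Icc (-1) 1)
    (hb : b ∈ Icc (-1) 1) : IntervalIntegrable (ellipticKernel k) volume a b := by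
  have hmeas : Measurable (ellipticKernel k) := by unfold ellipticKernel; fun_prop
  refine ((Polynomial.Chebyshev.intervalIntegrable_sqrt_one_sub_sq_inv.const_mul
    (√(1 - k ^ 2))⁻¹).mono_fun' hmeas.aestronglyMeasurable ?_).mono_set ?_
  · rw [uIoc_of_le (by norm_num), EventuallyLE, ae_restrict_iff' measurableSet_Ioc]
    refine .of_forall fun s hs => ?_
    rw [Real.norm_of_nonneg (by unfold ellipticKernel; positivity)]
    exact ellipticKernel_le hk (Ioc_subset_Icc_self hs)
  · rw [uIcc_of_le (by norm_num : (-1 : ℝ) ≤ 1)]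
    exact uIcc_subset_Icc ha hb

lemma hasDerivAt_ellipticF (hk : k ∈ Ioo 0 1) {x : ℝ} (hx : x ∈ Ioo (-1) 1) :
    HasDerivAt (ellipticF k) (ellipticKernel k x) x :=
  integral_hasDerivAt_right
    (intervalIntegrable_ellipticKernel hk (by norm_num) (Ioo_subset_Icc_self hx))
    ((continuousOn_ellipticKernel hk).stronglyMeasurableAtFilter isOpen_Ioo x hx)
    ((continuousOn_ellipticKernel hk).continuousAt (isOpen_Ioo.mem_nhds hx))

lemma continuousOn_ellipticF (hk : k ∈ Ioo 0 1) : ContinuousOn (ellipticF k) (Icc (-1) 1) := by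
  have h := continuousOn_primitive_interval' (a := 0)
    (intervalIntegrable_ellipticKernel hk (a := -1) (b := 1) (by norm_num) (by norm_num))
    (by rw [uIcc_of_le (by norm_num)]; norm_num)
  rwa [uIcc_of_le (by norm_num)] at h

lemma strictMonoOn_ellipticF (hk : k ∈ Ioo 0 1) : StrictMonoOn (ellipticF k) (Icc (-1) 1) :=
  strictMonoOn_of_deriv_pos (convex_Icc _ _) (continuousOn_ellipticF hk) fun x hx => by
    rw [interior_Icc] at hx
    rw [(hasDerivAt_ellipticF hk hx).deriv]
    exact ellipticKernel_pos hk hx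

lemma Kint_pos (hk : k ∈ Ioo 0 1) : 0 < Kint k := by
  rw [← ellipticF_one, ← ellipticF_zero k]
  exact strictMonoOn_ellipticF hk (by norm_num) (by norm_num) one_pos

lemma Kint_sub_Eint_eq (hk : k ∈ Ioo 0 1) :
    Kint k - Eint k = k ^ 2 * ∫ s in (0:ℝ)..1, s ^ 2 * ellipticKernel k s := by
  have hK := intervalIntegrable_ellipticKernel hk (a := 0) (b := 1) (by norm_num) (by norm_num)
  have hE : Eint k = ∫ s in (0:ℝ)..1, (1 - k ^ 2 * s ^ 2) * ellipticKernel k s := by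
    refine integral_congr fun s hs => ?_
    rw [uIcc_of_le zero_le_one] at hs
    exact sqrt_div_eq_mul_one_div_sqrt_mul _
      (one_sub_sq_mul_sq_pos hk ⟨by linarith [hs.1], hs.2⟩).le
  rw [hE, ← intervalIntegral.integral_const_mul, ← ellipticF_one, ellipticF, ← integral_sub hK
    (hK.continuousOn_mul (by fun_prop))]
  refine integral_congr fun s _ => ?_
  simp only [ellipticKernel]
  ring

end EllipticIntegrals

def snForce (k x : ℝ) : ℝ := 2 * k ^ 2 * x ^ 3 - (1 + k ^ 2) * x

lemma snForce_neg (k x : ℝ) : snForce k (-x) = -snForce k x := by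
  simp only [snForce]
  ring

lemma locallyLipschitz_snForce (k : ℝ) : LocallyLipschitz (snForce k) :=
  ContDiff.locallyLipschitz (𝕂 := ℝ) (by unfold snForce; fun_prop)

section JacobiSn

variable {k : ℝ}

lemma abs_le_one_of_quartic_nonneg (hk : k ∈ Ioo 0 1) {y : ℝ → ℝ} (hy : Continuous y)
    (hy0 : y 0 = 0) (h : ∀ t, 0 ≤ (1 - y t ^ 2) * (1 - k ^ 2 * y t ^ 2)) (t : ℝ) :
    |y t| ≤ 1 := by
  -- the quartic is negative on `(1, 1/k)`, a gap that `|y|` would have to cross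
  by_contra! ht
  have hk₁ : 1 < 1 / k := by rw [lt_div_iff₀ hk.1]; linarith [hk.2]
  obtain ⟨m, hm₁, hm₂⟩ := exists_between (lt_min hk₁ ht)
  obtain ⟨s, -, hs⟩ : m ∈ (fun s => |y s|) '' uIcc 0 t := by
    refine intermediate_value_uIcc hy.abs.continuousOn ?_
    rw [hy0, abs_zero, uIcc_of_le (abs_nonneg _)]
    exact ⟨by linarith, (hm₂.trans_le (min_le_right _ _)).le⟩
  have hkm : k * m < 1 := by
    have := hm₂.trans_le (min_le_left _ _)
    rwa [lt_div_iff₀ hk.1, mul_comm] at this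
  have hneg : (1 - m ^ 2) * (1 - k ^ 2 * m ^ 2) < 0 :=
    mul_neg_of_neg_of_pos (by nlinarith) (by nlinarith [mul_pos hk.1 (zero_lt_one.trans hm₁)])
  have := h s
  rw [← sq_abs (y s), show |y s| = m from hs] at this
  linarith

lemma mem_Ioo_of_sq_eq_quartic (hk : k ∈ Ioo 0 1) {a b : ℝ} (ha : |a| ≤ 1) (hb : b ≠ 0)
    (h : b ^ 2 = (1 - a ^ 2) * (1 - k ^ 2 * a ^ 2)) : a ∈ Ioo (-1) 1 := by
  have h₁ := one_sub_sq_mul_sq_pos hk (abs_le.1 ha)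
  have hb₂ : 0 < b ^ 2 := by positivity
  rw [h] at hb₂
  have h₂ : a ^ 2 < 1 := by linarith [pos_of_mul_pos_left hb₂ h₁.le]
  exact abs_lt.1 ((sq_lt_one_iff_abs_lt_one a).1 h₂)

lemma eq_one_of_quartic_eq_zero (hk : k ∈ Ioo 0 1) {a : ℝ} (ha : a ∈ Icc 0 1)
    (h : (1 - a ^ 2) * (1 - k ^ 2 * a ^ 2) = 0) : a = 1 := by
  have h₁ := one_sub_sq_mul_sq_pos hk ⟨by linarith [ha.1], ha.2⟩
  have h₂ : 1 - a ^ 2 = 0 := (mul_eq_zero.1 h).resolve_right h₁.ne'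
  nlinarith [ha.1, ha.2]

lemma ellipticKernel_mul_eq_one {a b : ℝ} (hb : 0 < b)
    (h : b ^ 2 = (1 - a ^ 2) * (1 - k ^ 2 * a ^ 2)) : ellipticKernel k a * b = 1 := by
  rw [ellipticKernel, ← h, Real.sqrt_sq hb.le, one_div, inv_mul_cancel₀ hb.ne']

variable {y y' : ℝ → ℝ}

lemma sq_deriv_eq_of_hasDerivAt_snForce (hy : ∀ t, HasDerivAt y (y' t) t)
    (hy' : ∀ t, HasDerivAt y' (snForce k (y t)) t) (hy0 : y 0 = 0) (hy0' : y' 0 = 1) (t : ℝ) :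
    y' t ^ 2 = (1 - y t ^ 2) * (1 - k ^ 2 * y t ^ 2) := by
  have h := ODE_second_order_energy_eq
    (G := fun x => k ^ 2 / 2 * x ^ 4 - (1 + k ^ 2) / 2 * x ^ 2)
    (fun x => (((hasDerivAt_pow 4 x).const_mul _).fun_sub
      ((hasDerivAt_pow 2 x).const_mul _)).congr_deriv (by simp only [snForce]; ring)) hy hy' t 0
  rw [hy0, hy0'] at h
  linear_combination h

lemma mem_Icc_of_deriv_pos (hy : ∀ t, HasDerivAt y (y' t) t) (hbound : ∀ t, |y t| ≤ 1)
    (hy0 : y 0 = 0) {t : ℝ} (ht : 0 ≤ t) (hpos : ∀ s ∈ Ico 0 t, 0 < y' s) : y t ∈ Icc 0 1 := by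
  have hmono : MonotoneOn y (Icc 0 t) :=
    monotoneOn_of_deriv_nonneg (convex_Icc 0 t) (HasDerivAt.continuousOn fun s _ => hy s)
      (fun s _ => (hy s).differentiableAt.differentiableWithinAt) fun s hs => by
        rw [interior_Icc] at hs
        rw [(hy s).deriv]
        exact (hpos s ⟨hs.1.le, hs.2⟩).le
  refine ⟨?_, (abs_le.1 (hbound t)).2⟩
  simpa [hy0] using hmono ⟨le_rfl, ht⟩ ⟨ht, le_rfl⟩ ht

lemma ellipticF_comp_eq (hk : k ∈ Ioo 0 1) (hy : ∀ t, HasDerivAt y (y' t) t)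
    (hE : ∀ t, y' t ^ 2 = (1 - y t ^ 2) * (1 - k ^ 2 * y t ^ 2)) (hbound : ∀ t, |y t| ≤ 1)
    (hy0 : y 0 = 0) {t : ℝ} (ht : 0 ≤ t) (hpos : ∀ s ∈ Ico 0 t, 0 < y' s) :
    ellipticF k (y t) = t := by
  have hderiv : ∀ s ∈ Ico 0 t, HasDerivAt (fun s => ellipticF k (y s)) 1 s := fun s hs => by
    have hys := mem_Ioo_of_sq_eq_quartic hk (hbound s) (hpos s hs).ne' (hE s)
    exact ((hasDerivAt_ellipticF hk hys).comp s (hy s)).congr_deriv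
      (ellipticKernel_mul_eq_one (hpos s hs) (hE s))
  exact eq_of_has_deriv_right_eq (fun s hs => (hderiv s hs).hasDerivWithinAt)
    (fun s _ => (hasDerivAt_id s).hasDerivWithinAt)
    ((continuousOn_ellipticF hk).comp (HasDerivAt.continuousOn fun s _ => hy s)
      fun s _ => abs_le.1 (hbound s))
    continuousOn_id (by simp [hy0, ellipticF_zero]) t ⟨ht, le_rfl⟩

lemma exists_mem_Icc_Kint_deriv_eq_zero (hk : k ∈ Ioo 0 1) (hy : ∀ t, HasDerivAt y (y' t) t)
    (hE : ∀ t, y' t ^ 2 = (1 - y t ^ 2) * (1 - k ^ 2 * y t ^ 2)) (hbound : ∀ t, |y t| ≤ 1)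
    (hy0 : y 0 = 0) (hc : Continuous y') (hy0' : y' 0 = 1) :
    ∃ T ∈ Icc 0 (Kint k), y' T = 0 := by
  -- otherwise `K = F(y K) < F(1) = K`
  by_contra! h
  have hK := (Kint_pos hk).le
  have hpos : ∀ t ∈ Icc 0 (Kint k), 0 < y' t := fun t ht =>
    pos_of_forall_ne_zero ht.1 hc.continuousOn (by rw [hy0']; exact one_pos)
      fun s hs => h s ⟨hs.1, hs.2.trans ht.2⟩
  have hpos' : ∀ s ∈ Ico 0 (Kint k), 0 < y' s := fun s hs => hpos s (Ico_subset_Icc_self hs)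
  have hyK := ellipticF_comp_eq hk hy hE hbound hy0 hK hpos'
  have hlt := (mem_Ioo_of_sq_eq_quartic hk (hbound _) (hpos _ ⟨hK, le_rfl⟩).ne' (hE _)).2
  have hnn := (mem_Icc_of_deriv_pos hy hbound hy0 hK hpos').1
  have := strictMonoOn_ellipticF hk ⟨by linarith, hlt.le⟩ ⟨by norm_num, le_rfl⟩ hlt
  rw [hyK, ellipticF_one] at this
  exact lt_irrefl _ this

theorem quarter_period_Kint (hk : k ∈ Ioo 0 1) (hy : ∀ t, HasDerivAt y (y' t) t)
    (hE : ∀ t, y' t ^ 2 = (1 - y t ^ 2) * (1 - k ^ 2 * y t ^ 2)) (hbound : ∀ t, |y t| ≤ 1)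
    (hy0 : y 0 = 0) (hc : Continuous y') (hy0' : y' 0 = 1) :
    (∀ t ∈ Ico 0 (Kint k), 0 < y' t) ∧ y (Kint k) = 1 ∧ y' (Kint k) = 0 := by
  -- `T` is the first zero of `y'`; the energy identity forces `y T = 1`, so `T = F(1) = K`.
  set Z := Icc 0 (Kint k) ∩ y' ⁻¹' {0}
  have hZ : BddBelow Z := ⟨0, fun t ht => ht.1.1⟩
  have hT : sInf Z ∈ Z := (isClosed_Icc.inter (isClosed_singleton.preimage hc)).csInf_mem
    (exists_mem_Icc_Kint_deriv_eq_zero hk hy hE hbound hy0 hc hy0') hZ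
  set T := sInf Z
  have hpos : ∀ s ∈ Ico 0 T, 0 < y' s := fun s hs =>
    pos_of_forall_ne_zero hs.1 hc.continuousOn (by rw [hy0']; exact one_pos) fun r hr hr0 =>
      (csInf_le hZ ⟨⟨hr.1, hr.2.trans (hs.2.le.trans hT.1.2)⟩, hr0⟩).not_gt (hr.2.trans_lt hs.2)
  have hyT : y T = 1 :=
    eq_one_of_quartic_eq_zero hk (mem_Icc_of_deriv_pos hy hbound hy0 hT.1.1 hpos)
      (by rw [← hE, show y' T = 0 from hT.2]; ring)
  have hTK : T = Kint k := by
    rw [← ellipticF_comp_eq hk hy hE hbound hy0 hT.1.1 hpos, hyT, ellipticF_one]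
  rw [← hTK]
  exact ⟨hpos, hyT, hT.2⟩

theorem integral_sq_eq_integral_sq_mul_ellipticKernel (hk : k ∈ Ioo 0 1)
    (hy : ∀ t, HasDerivAt y (y' t) t)
    (hE : ∀ t, y' t ^ 2 = (1 - y t ^ 2) * (1 - k ^ 2 * y t ^ 2)) (hbound : ∀ t, |y t| ≤ 1)
    (hy0 : y 0 = 0) (hpos : ∀ t ∈ Ico 0 (Kint k), 0 < y' t) (hyK : y (Kint k) = 1) :
    ∫ t in (0:ℝ)..Kint k, y t ^ 2 = ∫ s in (0:ℝ)..1, s ^ 2 * ellipticKernel k s := by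
  have hyc : Continuous y := continuous_iff_continuousAt.2 fun t => (hy t).continuousAt
  have hinv : ∀ s ∈ Icc (0:ℝ) 1, y (ellipticF k s) = s := by
    intro s hs
    obtain ⟨t, ht, rfl⟩ := intermediate_value_Icc (Kint_pos hk).le hyc.continuousOn
      (by rwa [hy0, hyK])
    rw [ellipticF_comp_eq hk hy hE hbound hy0 ht.1 fun r hr => hpos r ⟨hr.1, hr.2.trans_le ht.2⟩]
  have hI : uIcc (0:ℝ) 1 = Icc 0 1 := uIcc_of_le zero_le_one
  have hcont : ContinuousOn (ellipticF k) (uIcc 0 1) :=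
    (continuousOn_ellipticF hk).mono (hI ▸ Icc_subset_Icc (by norm_num) le_rfl)
  have hint : IntegrableOn (fun s => s ^ 2 * ellipticKernel k s) (uIcc 0 1) := by
    rw [hI, ← intervalIntegrable_iff_integrableOn_Icc_of_le zero_le_one]
    exact (intervalIntegrable_ellipticKernel hk (by norm_num) (by norm_num)).continuousOn_mul
      (by fun_prop)
  have h := integral_comp_mul_deriv''' (g := fun t => y t ^ 2) hcont
    (fun x hx => (hasDerivAt_ellipticF hk
      (Ioo_subset_Ioo (by norm_num) (by norm_num) hx)).hasDerivWithinAt)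
    (hyc.pow 2).continuousOn
    ((hyc.pow 2).continuousOn.integrableOn_compact (isCompact_uIcc.image_of_continuousOn hcont))
    (hint.congr_fun (fun s hs => by simp [hinv s (hI ▸ hs)]) measurableSet_uIcc)
  rw [ellipticF_zero, ellipticF_one] at h
  rw [← h]
  refine integral_congr fun s hs => ?_
  simp [hinv s (hI ▸ hs)]

end JacobiSn

theorem stmt5 (k : ℝ) (hk : k ∈ Set.Ioo (0:ℝ) 1)
    (y : ℝ → ℝ) (hy : ContDiff ℝ 2 y)
    (hode : ∀ x : ℝ, deriv (deriv y) x + (1 + k ^ 2) * y x - 2 * k ^ 2 * (y x) ^ 3 = 0)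
    (hy0 : y 0 = 0) (hy0' : deriv y 0 = 1)
    (n : ℕ) (hn : 0 < n)
    (u : ℝ → ℝ)
    (hu : ∀ x : ℝ, u x = Real.sqrt (2 * k ^ 2 / (1 + k ^ 2)) * y ((2 * n * x + 1) * Kint k)) :
    ∫ x in (0:ℝ)..1, (u x) ^ 2 = 2 / (1 + k ^ 2) * (1 - Eint k / Kint k) := by
  have hY : ∀ t, HasDerivAt y (deriv y t) t := fun t =>
    (hy.differentiable two_ne_zero t).hasDerivAt
  have hD : ∀ t, HasDerivAt (deriv y) (snForce k (y t)) t := fun t =>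
    (((contDiff_succ_iff_deriv (n := 1)).1 hy).2.2.differentiable one_ne_zero t).hasDerivAt
      |>.congr_deriv (by rw [snForce]; linarith [hode t])
  have hE := sq_deriv_eq_of_hasDerivAt_snForce hY hD hy0 hy0'
  have hbound := abs_le_one_of_quartic_nonneg hk hy.continuous hy0 fun t => hE t ▸ sq_nonneg _
  obtain ⟨hpos, hyK, hy'K⟩ :=
    quarter_period_Kint hk hY hE hbound hy0 (hy.continuous_deriv one_le_two) hy0'
  have hsymm := ODE_second_order_reflect_of_deriv_eq_zero (locallyLipschitz_snForce k) hY hD hy'K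
  have hanti := ODE_second_order_antiperiodic (locallyLipschitz_snForce k) (snForce_neg k)
    hY hD hy0 hy'K
  have hper : Function.Periodic (fun t => y t ^ 2) (2 * Kint k) := fun t => by
    simp only [sub_zero] at hanti
    simp only [hanti t, neg_sq]
  calc ∫ x in (0:ℝ)..1, u x ^ 2
      = 2 * k ^ 2 / (1 + k ^ 2) * ∫ x in (0:ℝ)..1, y ((2 * n * x + 1) * Kint k) ^ 2 := by
        rw [← intervalIntegral.integral_const_mul]
        refine integral_congr fun x _ => ?_
        rw [hu, mul_pow, Real.sq_sqrt (by positivity)]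
    _ = 2 * k ^ 2 / (1 + k ^ 2) * ((Kint k)⁻¹ * ∫ t in (0:ℝ)..Kint k, y t ^ 2) := by
        rw [hper.intervalIntegral_comp_two_mul_nat_mul_add_one (fun t => by rw [hsymm])
          (Kint_pos hk).ne' (fun _ _ => (hy.continuous.pow 2).intervalIntegrable _ _) hn.ne']
    _ = 2 / (1 + k ^ 2) * (1 - Eint k / Kint k) := by
        have hK := (Kint_pos hk).ne'
        rw [integral_sq_eq_integral_sq_mul_ellipticKernel hk hY hE hbound hy0 hpos hyK,
          show Eint k = Kint k - k ^ 2 * ∫ s in (0:ℝ)..1, s ^ 2 * ellipticKernel k s by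
            linarith [Kint_sub_Eint_eq hk]]
        field_simp
        ring
end

section
/- Let n be a positive integer and for each ε ∈ (0, 1/(nπ)) let k(ε) ∈ (0,1) be the unique solution of √(1+k²)·K(k) = 1/(2nε). Define χ(ε) := (1−k(ε)²)²·K(k(ε)) / ((1+k(ε)²)·(2E(k(ε)) − (1−k(ε)²)·K(k(ε)))). Then χ(ε)·n·ε·exp(√2/(n·ε)) → 16√2 as ε → 0⁺; that is, χ(ε) = (16√2/(nε))·exp(−√2/(nε))·(1+o(1)), so the hypothesis χ(ε) < δ of the Hopf bifurcation theorems holds for all sufficiently small ε > 0 whenever δ > 0 is fixed. -/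
/-!
As `ε → 0⁺` the modulus `k = k(ε)` tends to `1`, and with `k' = √(1 - k²)` one has
`K(k) = log (4 / k') + o(1)`, `E(k) → 1` and `k'² K(k) → 0`. The logarithmic asymptotics of `K`
come from the substitution `s = √(1 - u²)`, which turns `K(k)` into
`∫₀¹ du / √((1 - u²)(k'² + k² u²))`; splitting off the elementary integral
`∫₀¹ du / √(k'² + k² u²) = k⁻¹ log ((1 + k) / k')` leaves an integrand dominated uniformly
in `k`, whose integral tends to `log 2` by dominated convergence.

Since `n ε = 1 / (2 √(1 + k²) K)`, the quantity `χ n ε exp (√2 / (n ε))` equals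
`k'⁴ exp (2 √2 √(1 + k²) K) / (2 (1 + k²)^(3/2) (2 E - k'² K))`. The numerator tends to
`4⁴ = 256`, because the error `√(1 + k²) - √2 = O(k'²)` in the exponent is killed by `log k'`,
and the denominator tends to `8 √2`.
-/

open Real Filter Set

open MeasureTheory intervalIntegral Topology
open scoped Interval

lemma ContinuousAt.tendsto_nhdsWithin_of_eq {X Y : Type*} [TopologicalSpace X]
    [TopologicalSpace Y] {f : X → Y} {a : X} {b : Y} {s : Set X} (hf : ContinuousAt f a)
    (h : f a = b) : Tendsto f (𝓝[s] a) (𝓝 b) :=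
  h ▸ hf.tendsto.mono_left nhdsWithin_le_nhds

lemma ae_mem_Ioo_of_mem_uIoc : ∀ᵐ s : ℝ, s ∈ Ι (0:ℝ) 1 → s ∈ Ioo (0:ℝ) 1 := by
  filter_upwards [(ae_iff.2 (by simp) : ∀ᵐ s : ℝ, s ≠ 1)] with s hs1 hs
  rw [uIoc_of_le zero_le_one] at hs
  exact ⟨hs.1, lt_of_le_of_ne hs.2 hs1⟩

lemma intervalIntegrable_one_sub_rpow_neg_half :
    IntervalIntegrable (fun s : ℝ => (1 - s) ^ (-(1/2) : ℝ)) volume 0 1 := by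
  have h := (intervalIntegrable_rpow' (a := (0:ℝ)) (b := 1) (r := -(1/2)) (by norm_num))
    |>.comp_sub_left 1
  exact (by simpa using h : IntervalIntegrable _ volume 1 0).symm

lemma IntervalIntegrable.of_abs_le_mul_one_sub_rpow {f : ℝ → ℝ} (hf : Measurable f) {C : ℝ}
    (hb : ∀ s ∈ Ioo (0:ℝ) 1, |f s| ≤ C * (1 - s) ^ (-(1/2) : ℝ)) :
    IntervalIntegrable f volume 0 1 := by
  refine (intervalIntegrable_one_sub_rpow_neg_half.const_mul C).mono_fun
    hf.aestronglyMeasurable ?_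
  refine (ae_restrict_iff' measurableSet_uIoc).2 ?_
  filter_upwards [ae_mem_Ioo_of_mem_uIoc] with s hs hs'
  exact (hb s (hs hs')).trans (le_abs_self _)

lemma one_div_sqrt_one_sub_sq_mul_le {h : ℝ → ℝ} {c : ℝ} (hc : 0 < c) {s : ℝ}
    (hs : s ∈ Ioo (0:ℝ) 1) (hcs : c ≤ h s) :
    1 / √((1 - s ^ 2) * h s) ≤ (√c)⁻¹ * (1 - s) ^ (-(1/2) : ℝ) := by
  have hprod : c * (1 - s) ≤ (1 - s ^ 2) * h s := by
    have h1s : 0 ≤ 1 - s := by linarith [hs.2]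
    nlinarith [mul_le_mul_of_nonneg_left hcs h1s,
      mul_nonneg (mul_nonneg h1s hs.1.le) (hc.le.trans hcs)]
  rw [rpow_neg (by linarith [hs.2]), ← sqrt_eq_rpow, ← mul_inv, ← sqrt_mul hc.le, one_div]
  exact inv_anti₀ (sqrt_pos.2 (mul_pos hc (by linarith [hs.2]))) (sqrt_le_sqrt hprod)

lemma intervalIntegrable_one_div_sqrt_one_sub_sq_mul {h : ℝ → ℝ} (hm : Measurable h) {c : ℝ}
    (hc : 0 < c) (hb : ∀ s ∈ Ioo (0:ℝ) 1, c ≤ h s) :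
    IntervalIntegrable (fun s => 1 / √((1 - s ^ 2) * h s)) volume 0 1 :=
  IntervalIntegrable.of_abs_le_mul_one_sub_rpow (by fun_prop) fun s hs => by
    rw [abs_of_nonneg (by positivity)]
    exact one_div_sqrt_one_sub_sq_mul_le hc hs (hb s hs)

lemma Kint_integrable {k : ℝ} (hk : k ^ 2 < 1) :
    IntervalIntegrable (fun s => 1 / √((1 - s ^ 2) * (1 - k ^ 2 * s ^ 2))) volume 0 1 :=
  intervalIntegrable_one_div_sqrt_one_sub_sq_mul (by fun_prop) (sub_pos.2 hk) fun s hs => by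
    nlinarith [mul_le_mul_of_nonneg_left (by nlinarith [hs.1, hs.2] : s ^ 2 ≤ 1) (sq_nonneg k)]

lemma one_le_Kint {k : ℝ} (hk : k ^ 2 < 1) : 1 ≤ Kint k := by
  have h := integral_mono_ae_restrict zero_le_one intervalIntegrable_const (Kint_integrable hk)
    (f := fun _ => (1:ℝ)) ?_
  · simpa [Kint] using h
  refine (ae_restrict_iff' measurableSet_Icc).2 ?_
  filter_upwards [(ae_iff.2 (by simp) : ∀ᵐ s : ℝ, s ≠ 1)] with s hs1 hs
  have hs' : s ^ 2 < 1 := by nlinarith [hs.1, lt_of_le_of_ne hs.2 hs1]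
  have hk' : 0 < 1 - k ^ 2 * s ^ 2 := by nlinarith [mul_le_mul_of_nonneg_left hs'.le (sq_nonneg k)]
  rw [le_div_iff₀ (sqrt_pos.2 (by nlinarith)), one_mul, sqrt_le_one]
  nlinarith [mul_nonneg (sq_nonneg k) (sq_nonneg s)]

lemma Kint_monotoneOn : MonotoneOn Kint (Ico 0 1) := by
  intro a ha b hb hab
  have hb2 : b ^ 2 < 1 := by nlinarith [hb.1, hb.2]
  refine integral_mono_on zero_le_one (Kint_integrable (by nlinarith [ha.1])) (Kint_integrable hb2)
    fun s hs => ?_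
  rcases hs.2.eq_or_lt with rfl | hs1
  · simp
  have hs' : s ^ 2 < 1 := by nlinarith [hs.1]
  have hks : b ^ 2 * s ^ 2 < 1 := by nlinarith [mul_le_mul_of_nonneg_left hs'.le (sq_nonneg b)]
  refine one_div_le_one_div_of_le (sqrt_pos.2 (by nlinarith)) (sqrt_le_sqrt ?_)
  nlinarith [mul_le_mul_of_nonneg_right (pow_le_pow_left₀ ha.1 hab 2) (sq_nonneg s)]

lemma tendsto_nhdsLT_one_of_tendsto_Kint {α : Type*} {l : Filter α} {k : α → ℝ}
    (hk : ∀ᶠ x in l, k x ∈ Ioo 0 1) (hK : Tendsto (Kint ∘ k) l atTop) :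
    Tendsto k l (𝓝[<] 1) := by
  refine tendsto_nhdsWithin_iff.2 ⟨tendsto_order.2 ⟨fun a ha => ?_, fun a ha => ?_⟩,
    hk.mono fun x hx => hx.2⟩
  · rcases lt_or_ge a 0 with ha0 | ha0
    · exact hk.mono fun x hx => ha0.trans hx.1
    filter_upwards [hk, hK.eventually_gt_atTop (Kint a)] with x hx hKx
    by_contra! hxa
    exact (Kint_monotoneOn ⟨hx.1.le, hx.2⟩ ⟨ha0, ha⟩ hxa).not_gt hKx
  · exact hk.mono fun x hx => hx.2.trans ha

lemma tendsto_Kint_comp_atTop {α : Type*} {l : Filter α} {k : α → ℝ}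
    (hk : ∀ᶠ x in l, k x ∈ Ioo 0 1)
    (h : Tendsto (fun x => √(1 + k x ^ 2) * Kint (k x)) l atTop) :
    Tendsto (Kint ∘ k) l atTop := by
  refine tendsto_atTop_mono' l ?_ (h.const_mul_atTop (inv_pos.2 (sqrt_pos.2 two_pos)))
  filter_upwards [hk] with x hx
  have hK : 0 ≤ Kint (k x) := zero_le_one.trans (one_le_Kint (by nlinarith [hx.1, hx.2]))
  rw [Function.comp_apply, inv_mul_le_iff₀ (sqrt_pos.2 two_pos)]
  gcongr
  nlinarith [hx.1, hx.2]

lemma hasDerivAt_sqrt_one_sub_sq {x : ℝ} (hx : x ^ 2 < 1) :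
    HasDerivAt (fun y : ℝ => √(1 - y ^ 2)) (-x / √(1 - x ^ 2)) x := by
  have h := ((hasDerivAt_pow 2 x).const_sub 1).sqrt (sub_pos.2 hx).ne'
  exact h.congr_deriv (by field_simp; ring)

lemma bijOn_sqrt_one_sub_sq : BijOn (fun x : ℝ => √(1 - x ^ 2)) (Ioo 0 1) (Ioo 0 1) := by
  have hmaps : MapsTo (fun x : ℝ => √(1 - x ^ 2)) (Ioo 0 1) (Ioo 0 1) := fun x hx =>
    ⟨sqrt_pos.2 (by nlinarith [hx.1, hx.2]), (sqrt_lt' one_pos).2 (by nlinarith [hx.1, hx.2])⟩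
  have hinv : LeftInvOn (fun x : ℝ => √(1 - x ^ 2)) (fun x : ℝ => √(1 - x ^ 2)) (Ioo 0 1) :=
    fun x hx => by
      simp only
      rw [sq_sqrt (by nlinarith [hx.1, hx.2]), sub_sub_cancel, sqrt_sq hx.1.le]
  exact InvOn.bijOn ⟨hinv, hinv⟩ hmaps hmaps

lemma integral_Ioo_zero_one_eq_intervalIntegral (f : ℝ → ℝ) :
    ∫ x in Ioo (0:ℝ) 1, f x = ∫ x in (0:ℝ)..1, f x := by
  rw [integral_of_le zero_le_one, integral_Ioc_eq_integral_Ioo]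

lemma Kint_eq_integral_complementary {k : ℝ} (hk : k ^ 2 < 1) :
    Kint k = ∫ u in (0:ℝ)..1, 1 / √((1 - u ^ 2) * (1 - k ^ 2 + k ^ 2 * u ^ 2)) := by
  set g : ℝ → ℝ := fun u => 1 / √((1 - u ^ 2) * (1 - k ^ 2 + k ^ 2 * u ^ 2))
  have hsubst := integral_image_eq_integral_abs_deriv_smul measurableSet_Ioo
    (fun x hx =>
      (hasDerivAt_sqrt_one_sub_sq (by nlinarith [hx.1, hx.2] : x ^ 2 < 1)).hasDerivWithinAt)
    bijOn_sqrt_one_sub_sq.injOn g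
  rw [bijOn_sqrt_one_sub_sq.image_eq] at hsubst
  rw [← integral_Ioo_zero_one_eq_intervalIntegral, hsubst, Kint,
    ← integral_Ioo_zero_one_eq_intervalIntegral]
  refine setIntegral_congr_fun measurableSet_Ioo fun x hx => ?_
  have h1 : 0 < 1 - x ^ 2 := by nlinarith [hx.1, hx.2]
  have h2 : 0 < 1 - k ^ 2 * x ^ 2 := by
    nlinarith [mul_le_mul_of_nonneg_left (by nlinarith [hx.1, hx.2] : x ^ 2 ≤ 1) (sq_nonneg k)]
  have harg : (1 - √(1 - x ^ 2) ^ 2) * (1 - k ^ 2 + k ^ 2 * √(1 - x ^ 2) ^ 2) =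
      x ^ 2 * (1 - k ^ 2 * x ^ 2) := by
    rw [sq_sqrt h1.le]; ring
  simp only [g, smul_eq_mul, harg]
  rw [sqrt_mul (sq_nonneg x), sqrt_sq hx.1.le, sqrt_mul h1.le, abs_div, abs_neg,
    abs_of_pos hx.1, abs_of_pos (sqrt_pos.2 h1)]
  have := sqrt_pos.2 h2
  have := hx.1.ne'
  field_simp

lemma continuous_inv_sqrt_complementary {k : ℝ} (hk : k ^ 2 < 1) :
    Continuous fun u : ℝ => (√(1 - k ^ 2 + k ^ 2 * u ^ 2))⁻¹ :=
  Continuous.inv₀ (by fun_prop) fun u => (sqrt_pos.2 (by nlinarith [sq_nonneg (k * u)])).ne'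

lemma integral_inv_sqrt_complementary {k : ℝ} (hk0 : 0 < k) (hk : k ^ 2 < 1) :
    ∫ u in (0:ℝ)..1, (√(1 - k ^ 2 + k ^ 2 * u ^ 2))⁻¹ =
      1 / k * log ((1 + k) / √(1 - k ^ 2)) := by
  set c := √(1 - k ^ 2)
  have hc2 : c ^ 2 = 1 - k ^ 2 := sq_sqrt (by linarith)
  have hcpos : 0 < c := sqrt_pos.2 (by linarith)
  have hsqrt (u : ℝ) : √(1 + (k * u / c) ^ 2) = √(1 - k ^ 2 + k ^ 2 * u ^ 2) / c := by
    have e : 1 + (k * u / c) ^ 2 = (1 - k ^ 2 + k ^ 2 * u ^ 2) / c ^ 2 := by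
      rw [eq_div_iff (by positivity), add_mul, div_pow, div_mul_cancel₀ _ (by positivity), hc2]
      ring
    rw [e, sqrt_div (by nlinarith [sq_nonneg (k * u)]), sqrt_sq hcpos.le]
  have hderiv : ∀ u ∈ uIcc (0:ℝ) 1, HasDerivAt (fun u => 1 / k * arsinh (k * u / c))
      (√(1 - k ^ 2 + k ^ 2 * u ^ 2))⁻¹ u := fun u _ => by
    have h := ((((hasDerivAt_id u).const_mul k).div_const c).arsinh).const_mul (1 / k)
    refine h.congr_deriv ?_
    have : 0 < √(1 - k ^ 2 + k ^ 2 * u ^ 2) := sqrt_pos.2 (by nlinarith [sq_nonneg (k * u)])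
    simp only [id, smul_eq_mul, hsqrt]
    field_simp
  rw [integral_eq_sub_of_hasDerivAt hderiv
    ((continuous_inv_sqrt_complementary hk).intervalIntegrable 0 1), arsinh, hsqrt]
  simp only [mul_zero, zero_div, arsinh_zero, mul_one, sub_zero]
  congr 2
  rw [one_pow, mul_one, sub_add_cancel, sqrt_one, ← add_div, add_comm]

/-- The part of the integrand of `Kint_eq_integral_complementary` that is dominated uniformly
as `k → 1`; the rest, `(√(1 - k ^ 2 + k ^ 2 * u ^ 2))⁻¹`, integrates to a logarithm. -/
noncomputable def Krem (k u : ℝ) : ℝ :=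
  ((√(1 - u ^ 2))⁻¹ - 1) * (√(1 - k ^ 2 + k ^ 2 * u ^ 2))⁻¹

lemma one_div_sqrt_complementary_eq {k u : ℝ} (hu : u ^ 2 ≤ 1) :
    1 / √((1 - u ^ 2) * (1 - k ^ 2 + k ^ 2 * u ^ 2)) =
      Krem k u + (√(1 - k ^ 2 + k ^ 2 * u ^ 2))⁻¹ := by
  rw [Krem, sqrt_mul (sub_nonneg.2 hu), one_div, mul_inv]
  ring

lemma abs_Krem_le {k u : ℝ} (hk : k ∈ Icc (1/2 : ℝ) 1) (hu : u ∈ Ioo (0:ℝ) 1) :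
    |Krem k u| ≤ 2 * (1 - u) ^ (-(1/2) : ℝ) := by
  set c := √(1 - u ^ 2)
  have hu2 : 0 < 1 - u ^ 2 := by nlinarith [hu.1, hu.2]
  have hc : 0 < c := sqrt_pos.2 hu2
  have hc1 : c ≤ 1 := sqrt_le_one.2 (by nlinarith)
  have hc2 : c ^ 2 = 1 - u ^ 2 := sq_sqrt hu2.le
  have hfac : 0 ≤ c⁻¹ - 1 := sub_nonneg.2 ((one_le_inv₀ hc).2 hc1)
  have hq : (√(1 - k ^ 2 + k ^ 2 * u ^ 2))⁻¹ ≤ 2 / u := by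
    rw [← inv_div]
    refine inv_anti₀ (by linarith [hu.1]) (le_sqrt_of_sq_le ?_)
    nlinarith [hk.1, hk.2, mul_le_mul_of_nonneg_left hk.2 (sq_nonneg u)]
  have hc_inv : c⁻¹ ≤ (1 - u) ^ (-(1/2) : ℝ) := by
    simpa [c] using one_div_sqrt_one_sub_sq_mul_le (h := fun _ => 1) one_pos hu le_rfl
  calc |Krem k u| = (c⁻¹ - 1) * (√(1 - k ^ 2 + k ^ 2 * u ^ 2))⁻¹ :=
        abs_of_nonneg (mul_nonneg hfac (by positivity))
    _ ≤ (c⁻¹ - 1) * (2 / u) := mul_le_mul_of_nonneg_left hq hfac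
    _ = 2 * c⁻¹ * ((1 - c) / u) := by field_simp
    _ ≤ 2 * c⁻¹ * 1 := by
        gcongr
        exact div_le_one_of_le₀ (by nlinarith [hu.1, hu.2]) hu.1.le
    _ ≤ 2 * (1 - u) ^ (-(1/2) : ℝ) := by linarith

lemma intervalIntegrable_Krem {k : ℝ} (hk : k ∈ Icc (1/2 : ℝ) 1) :
    IntervalIntegrable (Krem k) volume 0 1 :=
  IntervalIntegrable.of_abs_le_mul_one_sub_rpow (by unfold Krem; fun_prop)
    fun _ hu => abs_Krem_le hk hu

lemma integral_Krem_one : ∫ u in (0:ℝ)..1, Krem 1 u = log 2 := by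
  have hcont : ContinuousOn (fun u : ℝ => -log (1 + √(1 - u ^ 2))) (Icc 0 1) :=
    ((Continuous.log (by fun_prop) fun u => (by positivity : (0:ℝ) < 1 + √(1 - u ^ 2)).ne').neg
      ).continuousOn
  have hderiv : ∀ u ∈ Ioo (0:ℝ) 1, HasDerivWithinAt (fun u : ℝ => -log (1 + √(1 - u ^ 2)))
      (Krem 1 u) (Ioi u) u := fun u hu => by
    have hu2 : u ^ 2 < 1 := by nlinarith [hu.1, hu.2]
    have hc : 0 < √(1 - u ^ 2) := sqrt_pos.2 (sub_pos.2 hu2)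
    have h := (((hasDerivAt_sqrt_one_sub_sq hu2).const_add 1).log (by positivity)).neg
    refine (h.congr_deriv ?_).hasDerivWithinAt
    rw [Krem, one_pow, one_mul, sub_self, zero_add, sqrt_sq hu.1.le]
    field_simp
    rw [eq_div_iff hu.1.ne']
    nlinarith [sq_sqrt (sub_pos.2 hu2).le]
  rw [integral_eq_sub_of_hasDeriv_right_of_le zero_le_one hcont hderiv
    (intervalIntegrable_Krem (by norm_num))]
  norm_num

lemma tendsto_integral_Krem :
    Tendsto (fun k => ∫ u in (0:ℝ)..1, Krem k u) (𝓝[<] 1) (𝓝 (log 2)) := by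
  rw [← integral_Krem_one]
  refine tendsto_integral_filter_of_dominated_convergence (fun u => 2 * (1 - u) ^ (-(1/2) : ℝ))
    (Eventually.of_forall fun k =>
      (by unfold Krem; fun_prop : Measurable (Krem k)).aestronglyMeasurable)
    ?_ (intervalIntegrable_one_sub_rpow_neg_half.const_mul 2) ?_
  · filter_upwards [Ico_mem_nhdsLT (by norm_num : (1/2 : ℝ) < 1)] with k hk
    filter_upwards [ae_mem_Ioo_of_mem_uIoc] with u hu hu'
    exact abs_Krem_le ⟨hk.1, hk.2.le⟩ (hu hu')
  · filter_upwards [ae_mem_Ioo_of_mem_uIoc] with u hu hu'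
    have hq : √(1 - 1 ^ 2 + 1 ^ 2 * u ^ 2) ≠ 0 := (sqrt_pos.2 (by nlinarith [(hu hu').1])).ne'
    exact (continuousAt_const.mul ((by fun_prop : ContinuousAt
      (fun k : ℝ => √(1 - k ^ 2 + k ^ 2 * u ^ 2)) 1).inv₀ hq)).tendsto.mono_left
      nhdsWithin_le_nhds

lemma Kint_eq_integral_Krem_add_log {k : ℝ} (hk : k ∈ Ico (1/2 : ℝ) 1) :
    Kint k = (∫ u in (0:ℝ)..1, Krem k u) + 1 / k * log ((1 + k) / √(1 - k ^ 2)) := by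
  have hk0 : 0 < k := by linarith [hk.1]
  have hk2 : k ^ 2 < 1 := by nlinarith [hk.2]
  rw [Kint_eq_integral_complementary hk2, ← integral_inv_sqrt_complementary hk0 hk2,
    ← integral_add (intervalIntegrable_Krem ⟨hk.1, hk.2.le⟩)
      ((continuous_inv_sqrt_complementary hk2).intervalIntegrable 0 1)]
  refine integral_congr fun u hu => one_div_sqrt_complementary_eq ?_
  rw [uIcc_of_le zero_le_one] at hu
  nlinarith [hu.1, hu.2]

lemma tendsto_one_sub_sq_mul_log :
    Tendsto (fun k : ℝ => (1 - k ^ 2) * log (1 - k ^ 2)) (𝓝[<] 1) (𝓝 0) :=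
  (continuous_mul_log.comp (by fun_prop : Continuous fun k : ℝ => 1 - k ^ 2)).continuousAt
    |>.tendsto_nhdsWithin_of_eq (by simp)

lemma tendsto_Kint_sub_log :
    Tendsto (fun k => Kint k - log (4 / √(1 - k ^ 2))) (𝓝[<] 1) (𝓝 0) := by
  have hlin : Tendsto (fun k : ℝ => 1 / k * log (1 + k) - log 2) (𝓝[<] 1) (𝓝 0) :=
    (((continuousAt_const.div continuousAt_id one_ne_zero).mul
      ((continuousAt_log (by norm_num)).comp (by fun_prop : ContinuousAt (fun k : ℝ => 1 + k) 1))
      ).sub continuousAt_const).tendsto_nhdsWithin_of_eq (by norm_num)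
  have hcoef : Tendsto (fun k : ℝ => 1 / (2 * k * (1 + k))) (𝓝[<] 1) (𝓝 (1 / 4)) :=
    (continuousAt_const.div (by fun_prop) (by norm_num)).tendsto_nhdsWithin_of_eq (by norm_num)
  have hsum := ((tendsto_integral_Krem.sub_const (log 2)).add hlin).sub
    (hcoef.mul tendsto_one_sub_sq_mul_log)
  simp only [sub_self, add_zero, mul_zero] at hsum
  refine hsum.congr' ?_
  filter_upwards [Ico_mem_nhdsLT (by norm_num : (1/2 : ℝ) < 1)] with k hk
  have hk0 : 0 < k := by linarith [hk.1]
  have hk2 : 0 < 1 - k ^ 2 := by nlinarith [hk.2]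
  have hlog4 : log 4 = 2 * log 2 := by
    rw [show (4:ℝ) = 2 ^ 2 by norm_num, log_pow]; norm_num
  rw [Kint_eq_integral_Krem_add_log hk, log_div (by linarith) (sqrt_pos.2 hk2).ne',
    log_div (by norm_num) (sqrt_pos.2 hk2).ne', log_sqrt hk2.le, hlog4]
  field_simp
  ring

lemma tendsto_Eint : Tendsto Eint (𝓝[<] 1) (𝓝 1) := by
  unfold Eint
  have h := tendsto_integral_filter_of_dominated_convergence (l := 𝓝[<] (1:ℝ))
    (F := fun k s => √((1 - k ^ 2 * s ^ 2) / (1 - s ^ 2))) (f := fun _ => 1)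
    (fun s => (1 - s) ^ (-(1/2) : ℝ))
    (Eventually.of_forall fun k => (by fun_prop : Measurable _).aestronglyMeasurable) ?_
    intervalIntegrable_one_sub_rpow_neg_half ?_
  · simpa using h
  · filter_upwards [Ioo_mem_nhdsLT (by norm_num : (0:ℝ) < 1)] with k hk
    filter_upwards [ae_mem_Ioo_of_mem_uIoc] with s hs hs'
    obtain ⟨hs0, hs1⟩ := hs hs'
    have hle : (1 - k ^ 2 * s ^ 2) / (1 - s ^ 2) ≤ 1 / (1 - s) := by
      rw [div_le_div_iff₀ (by nlinarith) (by linarith)]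
      nlinarith [mul_nonneg (sq_nonneg k) (sq_nonneg s), mul_nonneg (sq_nonneg (k * s)) hs0.le]
    rw [norm_of_nonneg (sqrt_nonneg _), rpow_neg (by linarith), ← sqrt_eq_rpow, ← sqrt_inv,
      ← one_div]
    exact sqrt_le_sqrt hle
  · filter_upwards [ae_mem_Ioo_of_mem_uIoc] with s hs hs'
    have hs2 : 1 - s ^ 2 ≠ 0 := by nlinarith [(hs hs').1, (hs hs').2]
    exact (by fun_prop : Continuous fun k : ℝ => √((1 - k ^ 2 * s ^ 2) / (1 - s ^ 2)))
      |>.continuousAt.tendsto_nhdsWithin_of_eq (by simp [div_self hs2])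

lemma tendsto_one_sub_sq_mul_Kint :
    Tendsto (fun k => (1 - k ^ 2) * Kint k) (𝓝[<] 1) (𝓝 0) := by
  have h1k : Tendsto (fun k : ℝ => 1 - k ^ 2) (𝓝[<] 1) (𝓝 0) :=
    (by fun_prop : ContinuousAt (fun k : ℝ => 1 - k ^ 2) 1).tendsto_nhdsWithin_of_eq (by simp)
  have hsum := ((h1k.mul tendsto_Kint_sub_log).add (h1k.mul_const (log 4))).sub
    (tendsto_one_sub_sq_mul_log.const_mul (1/2))
  simp only [zero_mul, mul_zero, add_zero, sub_zero] at hsum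
  refine hsum.congr' ?_
  filter_upwards [Ioo_mem_nhdsLT (by norm_num : (0:ℝ) < 1)] with k hk
  have hk2 : 0 < 1 - k ^ 2 := by nlinarith [hk.1, hk.2]
  rw [log_div (by norm_num) (sqrt_pos.2 hk2).ne', log_sqrt hk2.le]
  ring

lemma tendsto_sqrt_one_add_sq : Tendsto (fun k : ℝ => √(1 + k ^ 2)) (𝓝[<] 1) (𝓝 √2) :=
  (by fun_prop : ContinuousAt (fun k : ℝ => √(1 + k ^ 2)) 1)
    |>.tendsto_nhdsWithin_of_eq (by norm_num)

lemma tendsto_one_sub_sq_sq_mul_exp_Kint :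
    Tendsto (fun k => (1 - k ^ 2) ^ 2 * exp (2 * √2 * √(1 + k ^ 2) * Kint k)) (𝓝[<] 1)
      (𝓝 256) := by
  have h2 : √2 * √2 = 2 := mul_self_sqrt zero_le_two
  have hc : Tendsto (fun k : ℝ => 2 * √2 * √(1 + k ^ 2)) (𝓝[<] 1) (𝓝 4) := by
    have := tendsto_sqrt_one_add_sq.const_mul (2 * √2)
    rwa [mul_assoc 2 √2 √2, h2, show (2:ℝ) * 2 = 4 by norm_num] at this
  have hq : Tendsto (fun k : ℝ => 2 / (2 + √2 * √(1 + k ^ 2))) (𝓝[<] 1) (𝓝 (1 / 2)) := by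
    have := (tendsto_const_nhds (x := (2:ℝ))).div
      ((tendsto_sqrt_one_add_sq.const_mul √2).const_add 2) (by positivity : (2:ℝ) + √2 * √2 ≠ 0)
    rwa [h2, show (2:ℝ) / (2 + 2) = 1 / 2 by norm_num] at this
  have hexp := (((hc.mul tendsto_Kint_sub_log).add (hc.mul_const (log 4))).add
    (hq.mul tendsto_one_sub_sq_mul_log)).rexp
  have h256 : exp (4 * log 4) = 256 := by
    rw [← log_rpow (by norm_num), exp_log (by norm_num)]; norm_num
  simp only [mul_zero, zero_add, add_zero, h256] at hexp
  refine hexp.congr' ?_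
  filter_upwards [Ioo_mem_nhdsLT (by norm_num : (0:ℝ) < 1)] with k hk
  have hk2 : 0 < 1 - k ^ 2 := by nlinarith [hk.1, hk.2]
  have hs : √(1 + k ^ 2) ^ 2 = 1 + k ^ 2 := sq_sqrt (by positivity)
  have hden : 0 < 2 + √2 * √(1 + k ^ 2) := by positivity
  -- absorbs `(1 - k²)²` into the exponent up to a term `O((1 - k²) log (1 - k²))`
  have hconj : 2 / (2 + √2 * √(1 + k ^ 2)) * (1 - k ^ 2) = 2 - √2 * √(1 + k ^ 2) := by
    rw [div_mul_eq_mul_div, div_eq_iff hden.ne']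
    nlinarith
  rw [← exp_log (pow_pos hk2 2), ← exp_add, log_pow, log_div (by norm_num) (sqrt_pos.2 hk2).ne',
    log_sqrt hk2.le, ← mul_assoc _ (1 - k ^ 2), hconj]
  congr 1
  push_cast
  ring

lemma tendsto_chi_mul_exp :
    Tendsto (fun k => (1 - k ^ 2) ^ 2 * Kint k / ((1 + k ^ 2) * (2 * Eint k - (1 - k ^ 2) * Kint k))
      * (2 * √(1 + k ^ 2) * Kint k)⁻¹ * exp (2 * √2 * √(1 + k ^ 2) * Kint k)) (𝓝[<] 1)
      (𝓝 (16 * √2)) := by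
  have hD : Tendsto (fun k => 2 * Eint k - (1 - k ^ 2) * Kint k) (𝓝[<] 1) (𝓝 2) := by
    simpa using (tendsto_Eint.const_mul 2).sub tendsto_one_sub_sq_mul_Kint
  have h1k : Tendsto (fun k : ℝ => 1 + k ^ 2) (𝓝[<] 1) (𝓝 2) :=
    (by fun_prop : ContinuousAt (fun k : ℝ => 1 + k ^ 2) 1).tendsto_nhdsWithin_of_eq (by norm_num)
  have hden := ((h1k.mul hD).mul (tendsto_sqrt_one_add_sq.const_mul 2)).inv₀ (by positivity)
  have h := tendsto_one_sub_sq_sq_mul_exp_Kint.mul hden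
  have hval : (256 : ℝ) * (2 * 2 * (2 * √2))⁻¹ = 16 * √2 := by
    field_simp
    nlinarith [mul_self_sqrt (zero_le_two : (0:ℝ) ≤ 2)]
  rw [hval] at h
  refine h.congr' ?_
  filter_upwards [Ioo_mem_nhdsLT (by norm_num : (0:ℝ) < 1)] with k hk
  have hK : 0 < Kint k := one_pos.trans_le (one_le_Kint (by nlinarith [hk.1, hk.2]))
  have : 0 < √(1 + k ^ 2) := sqrt_pos.2 (by positivity)
  field_simp

theorem stmt15 (n : ℕ) (hn : 0 < n) (k : ℝ → ℝ)
    (hk : ∀ ε ∈ Set.Ioo (0:ℝ) (1 / (n * Real.pi)),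
      k ε ∈ Set.Ioo (0:ℝ) 1 ∧
      Real.sqrt (1 + (k ε) ^ 2) * Kint (k ε) = 1 / (2 * n * ε))
    (χ : ℝ → ℝ)
    (hχ : ∀ ε, χ ε = (1 - (k ε) ^ 2) ^ 2 * Kint (k ε) /
      ((1 + (k ε) ^ 2) * (2 * Eint (k ε) - (1 - (k ε) ^ 2) * Kint (k ε)))) :
    Filter.Tendsto
      (fun ε : ℝ => χ ε * n * ε * Real.exp (Real.sqrt 2 / (n * ε)))
      (nhdsWithin 0 (Set.Ioo (0:ℝ) (1 / (n * Real.pi))))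
      (nhds (16 * Real.sqrt 2)) := by
  set l := 𝓝[Ioo (0:ℝ) (1 / (n * π))] 0
  have hmem : ∀ᶠ ε in l, ε ∈ Ioo (0:ℝ) (1 / (n * π)) := self_mem_nhdsWithin
  have hnε : ∀ ε ∈ Ioo (0:ℝ) (1 / (n * π)),
      n * ε = (2 * √(1 + k ε ^ 2) * Kint (k ε))⁻¹ :=
    fun ε hε => by
      rw [mul_assoc, (hk ε hε).2]
      have := hε.1
      field_simp
  have hsK : Tendsto (fun ε => √(1 + k ε ^ 2) * Kint (k ε)) l atTop := by
    refine ((tendsto_inv_nhdsGT_zero.mono_left (nhdsWithin_mono _ Ioo_subset_Ioi_self)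
      ).const_mul_atTop (by positivity : (0:ℝ) < (2 * (n:ℝ))⁻¹)).congr' ?_
    filter_upwards [hmem] with ε hε
    rw [(hk ε hε).2, one_div, mul_inv (2 * (n:ℝ))]
  have hkmem : ∀ᶠ ε in l, k ε ∈ Ioo 0 1 := hmem.mono fun ε hε => (hk ε hε).1
  have hk1 := tendsto_nhdsLT_one_of_tendsto_Kint hkmem (tendsto_Kint_comp_atTop hkmem hsK)
  refine (tendsto_chi_mul_exp.comp hk1).congr' ?_
  filter_upwards [hmem] with ε hε
  rw [Function.comp_apply, hχ, mul_assoc _ (n:ℝ) ε, div_eq_mul_inv √2, hnε ε hε, inv_inv]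
  congr 2
  ring
end
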